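/- arXiv:2601.12361 — 4 statements merged into one kernel-verified Lean document; each statement's English description precedes it below -/
import Mathlib

section
/- Every acyclic Kripke structure with n states has at most 2^n traces. -/
/-- A Kripke structure over state type `S` and atomic propositions `AP`. -/
structure Kripke (S : Type) (AP : Type) where
  init : S
  rel : S → S → Prop
  label : S → Set AP
  total : ∀ s, ∃ s', rel s s'

/-- An infinite path starting at the initial state. -/
def Kripke.IsPath {S AP : Type} (K : Kripke S AP) (p : ℕ → S) : Prop :=
  p 0 = K.init ∧ ∀ i, K.rel (p i) (p (i + 1))

/-- A trace is the labeling sequence of an infinite path from the initial state. -/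
def Kripke.IsTrace {S AP : Type} (K : Kripke S AP) (t : ℕ → Set AP) : Prop :=
  ∃ p : ℕ → S, K.IsPath p ∧ ∀ i, t i = K.label (p i)

/-- Acyclic: self-loops only occur on states with no other successor, and the transition
relation restricted to pairs of distinct states has no cycles. -/
def Kripke.Acyclic {S AP : Type} (K : Kripke S AP) : Prop :=
  (∀ s s', K.rel s s → K.rel s s' → s' = s) ∧
  ∀ s, ¬ Relation.TransGen (fun a b => a ≠ b ∧ K.rel a b) s s

/-!
In an acyclic structure, reachability along non-loop transitions is a partial order, and every
path climbs it: it moves strictly upwards until it reaches a state with a self-loop, where it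
stays forever. So the successor of each state of a path is the least state of the path above it,
and a path is determined by the set of states it visits. Traces are images of paths, hence
inject into the `2 ^ n` subsets of the state space.
-/

open Relation

namespace Relation

variable {S : Type*} {r : S → S → Prop}

lemma reflTransGen_of_forall_rel_succ {p : ℕ → S} (hp : ∀ i, r (p i) (p (i + 1)))
    {i j : ℕ} (hij : i ≤ j) : ReflTransGen (fun a b => a ≠ b ∧ r a b) (p i) (p j) := by
  induction j, hij using Nat.le_induction with
  | base => rfl
  | succ j _ ih =>
    by_cases hj : p j = p (j + 1)
    · rwa [← hj]
    · exact ih.tail ⟨hj, hp j⟩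

lemma eq_of_reflTransGen_of_reflTransGen (hr : ∀ s, ¬ TransGen r s s) {a b : S}
    (hab : ReflTransGen r a b) (hba : ReflTransGen r b a) : a = b := by
  rcases reflTransGen_iff_eq_or_transGen.mp hab with rfl | hab'
  · rfl
  rcases reflTransGen_iff_eq_or_transGen.mp hba with rfl | hba'
  · rfl
  exact (hr a (hab'.trans hba')).elim

/-- Writing `p (i + 1) = q m`, acyclicity forces `i < m`, since `p` steps strictly upwards at `i`. -/
lemma reflTransGen_succ_of_mem_range (hr : ∀ s, ¬ TransGen (fun a b => a ≠ b ∧ r a b) s s)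
    {p q : ℕ → S} (hp : ∀ i, r (p i) (p (i + 1))) (hq : ∀ i, r (q i) (q (i + 1))) {i : ℕ} (hpq : p i = q i) (hne : p i ≠ p (i + 1))
    (hmem : p (i + 1) ∈ Set.range q) :
    ReflTransGen (fun a b => a ≠ b ∧ r a b) (q (i + 1)) (p (i + 1)) := by
  obtain ⟨m, hm⟩ := hmem
  have hstep : ReflTransGen (fun a b => a ≠ b ∧ r a b) (p i) (p (i + 1)) :=
    .single ⟨hne, hp i⟩
  have him : i < m := by
    by_contra! hmi
    have hback := reflTransGen_of_forall_rel_succ hq hmi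
    rw [hm, ← hpq] at hback
    exact hne (eq_of_reflTransGen_of_reflTransGen hr hstep hback)
  rw [← hm]
  exact reflTransGen_of_forall_rel_succ hq him

end Relation

namespace Kripke

variable {S AP : Type} {K : Kripke S AP}

lemma Acyclic.path_eq_of_range_eq (h : K.Acyclic) {p q : ℕ → S} (hp : K.IsPath p)
    (hq : K.IsPath q) (hpq : Set.range p = Set.range q) : p = q := by
  funext i
  induction i with
  | zero => rw [hp.1, hq.1]
  | succ i ih =>
    by_cases hloop : K.rel (p i) (p i)
    · rw [h.1 _ _ hloop (hp.2 i), h.1 _ _ (ih ▸ hloop) (hq.2 i), ih]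
    have hpne : p i ≠ p (i + 1) := fun e => hloop (e ▸ hp.2 i)
    have hqne : q i ≠ q (i + 1) := fun e => hloop (ih ▸ e ▸ hq.2 i)
    exact eq_of_reflTransGen_of_reflTransGen h.2
      (reflTransGen_succ_of_mem_range h.2 hq.2 hp.2 ih.symm hqne (hpq ▸ ⟨i + 1, rfl⟩))
      (reflTransGen_succ_of_mem_range h.2 hp.2 hq.2 ih hpne (hpq ▸ ⟨i + 1, rfl⟩))

end Kripke

/-- An acyclic Kripke structure with `n` states has at most `2 ^ n` traces. -/
theorem acyclic_traces_le {S AP : Type} [Fintype S]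
    (K : Kripke S AP) (h : K.Acyclic) :
    Nat.card {t : ℕ → Set AP // K.IsTrace t} ≤ 2 ^ Fintype.card S := by
  choose path hpath hlabel using fun t : {t : ℕ → Set AP // K.IsTrace t} => t.2
  have hinj : Function.Injective fun t => Set.range (path t) := by
    intro t₁ t₂ hrange
    have hpath_eq := h.path_eq_of_range_eq (hpath t₁) (hpath t₂) hrange
    exact Subtype.ext (funext fun i => by rw [hlabel t₁ i, hlabel t₂ i, hpath_eq])
  calc Nat.card {t : ℕ → Set AP // K.IsTrace t} ≤ Nat.card (Set S) :=
        Nat.card_le_card_of_injective _ hinj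
    _ = 2 ^ Fintype.card S := by
        classical
        rw [Nat.card_eq_fintype_card, Fintype.card_set]
end

section
/- Let l ∈ ℕ and let traces t, t' each encode l-bit binary numbers A, B (least significant bit first) with atomic propositions a and b respectively, meaning a ∈ t[i] iff bit i of A is 1 and b ∈ t'[i] iff bit i of B is 1 (identifying the encodings on a single trace). Then a trace π encoding A with a and B with b satisfies the LTL formula (a ∧ ¬b) U (¬a ∧ b ∧ X G(a ↔ b)) if and only if A + 1 = B and B ≠ 0 fits in l bits (no overflow), i.e., B = A + 1 with A < 2^l − 1. -/
private lemma succ_testBit_aux (A i : ℕ) (hlow : ∀ j < i, A.testBit j = true)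
    (hi : A.testBit i = false) :
    ∀ k, (A + 1).testBit k = (decide (k = i) || (decide (i < k) && A.testBit k)) := by
  have hmod : A % 2 ^ (i + 1) = 2 ^ i - 1 := by
    apply Nat.eq_of_testBit_eq
    intro k
    rw [Nat.testBit_mod_two_pow, Nat.testBit_two_pow_sub_one]
    rcases lt_trichotomy k i with h | h | h
    · simp [h, Nat.lt_succ_of_lt h, hlow k h]
    · subst h; simp [hi]
    · have h1 : ¬ k < i + 1 := by omega
      have h2 : ¬ k < i := by omega
      simp [h1, h2]
  have hpos : 0 < 2 ^ i := Nat.pow_pos (n := i) (by norm_num)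
  have hA1 : A + 1 = 2 ^ (i + 1) * (A / 2 ^ (i + 1)) + 2 ^ i := by
    conv_lhs => rw [← Nat.div_add_mod A (2 ^ (i + 1))]
    rw [hmod]
    omega
  set Q := A / 2 ^ (i + 1) with hQ
  intro k
  rcases lt_trichotomy k i with h | h | h
  · -- k < i : bit is false
    simp only [decide_eq_false (Nat.ne_of_lt h), decide_eq_false (Nat.not_lt.mpr (le_of_lt h)),
      Bool.false_or, Bool.false_and]
    rw [Nat.testBit_eq_decide_div_mod_eq, decide_eq_false]
    have h1 : 2 ^ (i + 1) = 2 ^ k * (2 * 2 ^ (i - k)) := by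
      rw [← pow_succ']
      rw [← pow_add]
      congr 1
      omega
    have h2 : 2 ^ i = 2 ^ k * (2 * 2 ^ (i - k - 1)) := by
      rw [← pow_succ']
      rw [← pow_add]
      congr 1
      omega
    rw [hA1, h1, h2, mul_assoc, ← Nat.mul_add, Nat.mul_div_cancel_left _ (Nat.pow_pos (n := k) (by norm_num))]
    have heven : 2 * 2 ^ (i - k) * Q + 2 * 2 ^ (i - k - 1) = 2 * (2 ^ (i - k) * Q + 2 ^ (i - k - 1)) := by ring
    rw [heven, Nat.mul_mod_right]
    omega
  · -- k = i : bit is true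
    subst h
    have hrhs : (decide (k = k) || (decide (k < k) && A.testBit k)) = true := by simp
    rw [hrhs, Nat.testBit_eq_decide_div_mod_eq, decide_eq_true_eq]
    have h1 : 2 ^ (k + 1) = 2 ^ k * 2 := by rw [pow_succ]
    rw [hA1, h1, mul_assoc]
    have : 2 ^ k * (2 * Q) + 2 ^ k = 2 ^ k * (2 * Q + 1) := by ring
    rw [this, Nat.mul_div_cancel_left _ hpos]
    omega
  · -- k > i : bit equals A's bit
    simp only [decide_eq_false (Nat.ne_of_gt h), decide_eq_true h, Bool.false_or, Bool.true_and]
    have hdiv : (A + 1) / 2 ^ (i + 1) = Q := by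
      rw [hA1, Nat.mul_add_div (Nat.pow_pos (by norm_num)),
        Nat.div_eq_of_lt (Nat.pow_lt_pow_right (by norm_num) (Nat.lt_succ_self i))]
      omega
    have hk : 2 ^ k = 2 ^ (i + 1) * 2 ^ (k - i - 1) := by
      rw [← pow_add]; congr 1; omega
    rw [Nat.testBit_eq_decide_div_mod_eq, Nat.testBit_eq_decide_div_mod_eq, hk,
      ← Nat.div_div_eq_div_mul, ← Nat.div_div_eq_div_mul, hdiv, hQ]

/-- A trace encoding `A` (LSB first) with proposition `a` and `B` with proposition `b`
satisfies the LTL formula `(a ∧ ¬b) U (¬a ∧ b ∧ X G (a ↔ b))` iff `B = A + 1` with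
`A < 2^l - 1` (binary increment without overflow). -/
theorem binary_increment_formula {AP : Type} (a b : AP) (hab : a ≠ b)
    (l A B : ℕ) (hA : A < 2 ^ l) (hB : B < 2 ^ l) (t : ℕ → Set AP)
    (henc_a : ∀ i, a ∈ t i ↔ i < l ∧ A.testBit i)
    (henc_b : ∀ i, b ∈ t i ↔ i < l ∧ B.testBit i) :
    (∃ i, (a ∉ t i ∧ b ∈ t i ∧ ∀ k, i < k → (a ∈ t k ↔ b ∈ t k)) ∧
        ∀ j < i, a ∈ t j ∧ b ∉ t j) ↔
      B = A + 1 ∧ A < 2 ^ l - 1 := by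
  constructor
  · rintro ⟨i, ⟨hna, hb, hsuf⟩, hpre⟩
    obtain ⟨hil, hBi⟩ := (henc_b i).mp hb
    have hAi : A.testBit i = false := by
      by_contra h
      exact hna ((henc_a i).mpr ⟨hil, by simpa using h⟩)
    have hlow : ∀ j < i, A.testBit j = true := fun j hj => ((henc_a j).mp (hpre j hj).1).2
    have hBlow : ∀ j < i, B.testBit j = false := by
      intro j hj
      have hnb := (hpre j hj).2
      by_contra h
      exact hnb ((henc_b j).mpr ⟨lt_trans hj hil, by simpa using h⟩)
    have hhigh : ∀ k, i < k → B.testBit k = A.testBit k := by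
      intro k hk
      by_cases hkl : k < l
      · have h1 : (k < l ∧ A.testBit k) ↔ (k < l ∧ B.testBit k) :=
          (henc_a k).symm.trans ((hsuf k hk).trans (henc_b k))
        simp only [hkl, true_and] at h1
        exact Bool.coe_iff_coe.mp h1.symm
      · have h1 : A < 2 ^ k := lt_of_lt_of_le hA (Nat.pow_le_pow_right (by norm_num) (Nat.le_of_not_lt hkl))
        have h2 : B < 2 ^ k := lt_of_lt_of_le hB (Nat.pow_le_pow_right (by norm_num) (Nat.le_of_not_lt hkl))
        rw [Nat.testBit_lt_two_pow h1, Nat.testBit_lt_two_pow h2]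
    have hsucc := succ_testBit_aux A i hlow hAi
    constructor
    · apply Nat.eq_of_testBit_eq
      intro k
      rw [hsucc k]
      rcases lt_trichotomy k i with h | h | h
      · simp [hBlow k h, Nat.ne_of_lt h, Nat.not_lt.mpr (le_of_lt h)]
      · subst h; simp [hBi]
      · simp [Nat.ne_of_gt h, h, hhigh k h]
    · have hne : A ≠ 2 ^ l - 1 := by
        intro h
        have := Nat.testBit_two_pow_sub_one l i
        rw [← h, hAi] at this
        simp [hil] at this
      omega
  · rintro ⟨hBA, hAl⟩
    subst hBA
    have hex : ∃ k, A.testBit k = false := by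
      by_contra h
      push_neg at h
      have : ∀ k, A.testBit k = true := by
        intro k
        cases hk : A.testBit k
        · exact absurd hk (h k)
        · rfl
      have hl : A = 2 ^ l - 1 := by
        apply Nat.eq_of_testBit_eq
        intro k
        rw [Nat.testBit_two_pow_sub_one]
        by_cases hkl : k < l
        · simp [hkl, this k]
        · rw [Nat.testBit_lt_two_pow (lt_of_lt_of_le hA (Nat.pow_le_pow_right (by norm_num) (Nat.le_of_not_lt hkl)))]
          simp [hkl]
      omega
    set i := Nat.find hex with hi_def
    have hAi : A.testBit i = false := Nat.find_spec hex
    have hlow : ∀ j < i, A.testBit j = true := by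
      intro j hj
      have := Nat.find_min hex hj
      cases hk : A.testBit j
      · exact absurd hk this
      · rfl
    have hil : i < l := by
      by_contra h
      have : A < 2 ^ l - 1 := hAl
      have hmod : A % 2 ^ l = 2 ^ l - 1 := by
        apply Nat.eq_of_testBit_eq
        intro k
        rw [Nat.testBit_mod_two_pow, Nat.testBit_two_pow_sub_one]
        by_cases hkl : k < l
        · simp [hkl, hlow k (lt_of_lt_of_le hkl (Nat.le_of_not_lt h))]
        · simp [hkl]
      rw [Nat.mod_eq_of_lt hA] at hmod
      omega
    have hsucc := succ_testBit_aux A i hlow hAi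
    refine ⟨i, ⟨?_, ?_, ?_⟩, ?_⟩
    · intro h
      have := ((henc_a i).mp h).2
      rw [hAi] at this
      exact absurd this (by simp)
    · refine (henc_b i).mpr ⟨hil, ?_⟩
      rw [hsucc i]
      simp
    · intro k hk
      rw [henc_a, henc_b, hsucc k]
      simp [Nat.ne_of_gt hk, hk]
    · intro j hj
      constructor
      · exact (henc_a j).mpr ⟨lt_trans hj hil, hlow j hj⟩
      · intro h
        have := ((henc_b j).mp h).2
        rw [hsucc j] at this
        simp [Nat.ne_of_lt hj, Nat.not_lt.mpr (le_of_lt hj)] at this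
end

section
/- Suppose A is a consistent propagation closure for a Horn formula h (i.e., the least set of forced signed literals, containing no contradictory pair). Define the assignment v by v(x) = true if (x, true) ∈ A and v(x) = false otherwise. Then v satisfies every clause of h. -/
/-- A Horn formula: a set of clauses `(l₁, l₂, l₃)` standing for `¬l₁ ∨ ¬l₂ ∨ l₃`, over
variables `V` including distinguished symbols for `⊤` and `⊥`. -/
structure HornSystem (V : Type) where
  vtop : V
  vbot : V
  clauses : Set (V × V × V)

/-- A clause `¬l₁ ∨ ¬l₂ ∨ l₃` is satisfied by an assignment. -/
def ClauseSat {V : Type} (v : V → Bool) (c : V × V × V) : Prop :=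
  v c.1 = false ∨ v c.2.1 = false ∨ v c.2.2 = true

/-- An assignment satisfies the Horn formula: `⊤` is true, `⊥` is false, and every clause
holds. -/
def HornSat {V : Type} (h : HornSystem V) (v : V → Bool) : Prop :=
  v h.vtop = true ∧ v h.vbot = false ∧ ∀ c ∈ h.clauses, ClauseSat v c

/-- A set of signed literals contains the initially forced assignments and is closed
under unit propagation: whenever two of the three literal assignments of a clause that
fail to satisfy it are present, the forced assignment of the third literal is present. -/
def PropClosed {V : Type} (h : HornSystem V) (A : Set (V × Bool)) : Prop :=
  (h.vtop, true) ∈ A ∧ (h.vbot, false) ∈ A ∧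
  ∀ c ∈ h.clauses,
    ((c.1, true) ∈ A → (c.2.1, true) ∈ A → (c.2.2, true) ∈ A) ∧
    ((c.1, true) ∈ A → (c.2.2, false) ∈ A → (c.2.1, false) ∈ A) ∧
    ((c.2.1, true) ∈ A → (c.2.2, false) ∈ A → (c.1, false) ∈ A)

/-- The least propagation-closed set of signed literals. -/
def HornClosure {V : Type} (h : HornSystem V) : Set (V × Bool) :=
  ⋂₀ {A : Set (V × Bool) | PropClosed h A}

namespace HornSystem

variable {V : Type} (h : HornSystem V)

theorem propClosed_sInter {S : Set (Set (V × Bool))} (hS : ∀ A ∈ S, PropClosed h A) :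
    PropClosed h (⋂₀ S) := by
  refine ⟨fun A hA => (hS A hA).1, fun A hA => (hS A hA).2.1, fun c hc => ?_⟩
  refine ⟨?_, ?_, ?_⟩ <;> intro h₁ h₂ A hA
  · exact ((hS A hA).2.2 c hc).1 (h₁ A hA) (h₂ A hA)
  · exact ((hS A hA).2.2 c hc).2.1 (h₁ A hA) (h₂ A hA)
  · exact ((hS A hA).2.2 c hc).2.2 (h₁ A hA) (h₂ A hA)

theorem propClosed_hornClosure : PropClosed h (HornClosure h) :=
  h.propClosed_sInter fun _ hA => hA

theorem clauseSat_of_propClosed {A : Set (V × Bool)} (hA : PropClosed h A) {v : V → Bool}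
    (hv : ∀ x, v x = true ↔ (x, true) ∈ A) {c : V × V × V} (hc : c ∈ h.clauses) :
    ClauseSat v c := by
  unfold ClauseSat
  simp only [Bool.eq_false_iff, ne_eq, hv]
  have := (hA.2.2 c hc).1
  tauto

end HornSystem

theorem horn_closure_assignment_satisfies_general {V : Type} (h : HornSystem V)
    (v : V → Bool) (hv : ∀ x, v x = true ↔ (x, true) ∈ HornClosure h) :
    ∀ c ∈ h.clauses, ClauseSat v c :=
  fun _ hc => h.clauseSat_of_propClosed h.propClosed_hornClosure hv hc

/-- If the propagation closure `A` of a Horn formula is consistent, then the assignment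
`v x = true ↔ (x, true) ∈ A` satisfies every clause of the formula. -/
theorem horn_closure_assignment_satisfies {V : Type} (h : HornSystem V)
    (hcons : ∀ x : V, ¬ ((x, true) ∈ HornClosure h ∧ (x, false) ∈ HornClosure h))
    (v : V → Bool) (hv : ∀ x, v x = true ↔ (x, true) ∈ HornClosure h) :
    ∀ c ∈ h.clauses, ClauseSat v c :=
  horn_closure_assignment_satisfies_general h v hv
end

section
/- Unrolling preserves trace sets: for any acyclic Kripke structure K there exists a tree-shaped Kripke structure T whose set of traces equals the set of traces of K, and the number of states of T is at most n · 2^n where n is the number of states of K. -/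
/-- Tree-shaped: every non-initial state has exactly one predecessor distinct from itself,
the initial state has no predecessor, and a state has a self-loop iff it has no other
successor. -/
def Kripke.TreeShaped {S AP : Type} (K : Kripke S AP) : Prop :=
  (∀ s', s' ≠ K.init → ∃! s, s ≠ s' ∧ K.rel s s') ∧
  (∀ s, ¬ K.rel s K.init) ∧
  (∀ s, K.rel s s ↔ ∀ s', s' ≠ s → ¬ K.rel s s')

namespace KripkeUnroll


variable {S AP : Type}

def ustep (K : Kripke S AP) (a b : S) : Prop := a ≠ b ∧ K.rel a b

def ulast (K : Kripke S AP) (l : List S) : S := l.getLastD K.init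

def uGood (K : Kripke S AP) (l : List S) : Prop :=
  List.Chain (ustep K) K.init l ∧ (K.init :: l).Nodup

lemma chain_snoc {R : S → S → Prop} : ∀ (l : List S) (a s : S),
    List.Chain R a (l ++ [s]) ↔ List.Chain R a l ∧ R (l.getLastD a) s
  | [], a, s => by simp [List.Chain]
  | b :: l, a, s => by
    have ih := chain_snoc (R := R) l b s
    simp only [List.Chain, List.cons_append, List.isChain_cons_cons, List.getLastD_cons] at ih ⊢
    rw [ih]
    tauto

lemma ulast_snoc (K : Kripke S AP) : ∀ (l : List S) (s : S), ulast K (l ++ [s]) = s := by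
  intro l s
  unfold ulast
  induction l with
  | nil => rfl
  | cons a t ih =>
    simp only [List.cons_append, List.getLastD_cons]
    induction t with
    | nil => rfl
    | cons b u _ => simp only [List.cons_append, List.getLastD_cons] at ih ⊢; exact ih

lemma chain_reach {R : S → S → Prop} : ∀ (l : List S) (a : S), List.Chain R a l →
    ∀ x ∈ a :: l, Relation.ReflTransGen R x (l.getLastD a)
  | [], a, _, x, hx => by
    simp at hx; subst hx; exact Relation.ReflTransGen.refl
  | b :: l, a, h, x, hx => by
    simp only [List.Chain, List.isChain_cons_cons] at h
    rw [List.getLastD_cons]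
    rcases List.mem_cons.mp hx with rfl | hx
    · exact Relation.ReflTransGen.trans (Relation.ReflTransGen.single h.1)
        (chain_reach l b h.2 b List.mem_cons_self)
    · exact chain_reach l b h.2 x hx

lemma not_mem_of_rel (K : Kripke S AP) (hK : K.Acyclic) {l : List S} {s : S}
    (hg : List.Chain (ustep K) K.init l) (hrel : K.rel (ulast K l) s) (hne : s ≠ ulast K l) :
    s ∉ K.init :: l := by
  intro hm
  have h1 : Relation.ReflTransGen (ustep K) s (ulast K l) := chain_reach _ _ hg s hm
  have h2 : Relation.TransGen (ustep K) s s := Relation.TransGen.tail' h1 ⟨Ne.symm hne, hrel⟩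
  exact hK.2 s h2

lemma uGood_snoc {K : Kripke S AP} {l : List S} {s : S} (hg : uGood K l)
    (hstep : ustep K (ulast K l) s) (hnm : s ∉ K.init :: l) : uGood K (l ++ [s]) := by
  refine ⟨(chain_snoc _ _ _).mpr ⟨hg.1, hstep⟩, ?_⟩
  have : (K.init :: (l ++ [s])) = (K.init :: l) ++ [s] := rfl
  rw [this]
  simp only [List.nodup_append, List.nodup_singleton, List.disjoint_singleton]
  exact ⟨hg.2, trivial, fun a ha b hb hab => hnm (by simp at hb; rw [← hb, ← hab]; exact ha)⟩

lemma uGood_prefix {K : Kripke S AP} {l : List S} {s : S} (hg : uGood K (l ++ [s])) :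
    uGood K l := by
  refine ⟨((chain_snoc _ _ _).mp hg.1).1, ?_⟩
  have hsub : (K.init :: l).Sublist (K.init :: (l ++ [s])) := by
    have := List.sublist_append_left (K.init :: l) [s]
    simpa using this
  exact hsub.nodup hg.2

lemma step_of_good_snoc {K : Kripke S AP} {l : List S} {s : S} (hg : uGood K (l ++ [s])) :
    ustep K (ulast K l) s := ((chain_snoc _ _ _).mp hg.1).2

lemma set_det (K : Kripke S AP) (hK : K.Acyclic) (l₁ : List S) : ∀ (l₂ : List S),
    uGood K l₁ → uGood K l₂ → (∀ x, x ∈ K.init :: l₁ ↔ x ∈ K.init :: l₂) → l₁ = l₂ := by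
  induction l₁ using List.reverseRecOn with
  | nil =>
    intro l₂ _ h₂ hmem
    cases l₂ with
    | nil => rfl
    | cons a t =>
      exfalso
      have ha : a = K.init := by
        have := (hmem a).mpr (by simp)
        simpa using this
      subst ha
      exact (List.nodup_cons.mp h₂.2).1 (by simp)
  | append_singleton m s ih =>
    intro l₂ h₁ h₂ hmem
    induction l₂ using List.reverseRecOn with
    | nil =>
      exfalso
      have hs : s = K.init := by
        have := (hmem s).mp (by simp)
        simpa using this
      have : K.init ∉ m ++ [s] := (List.nodup_cons.mp h₁.2).1
      exact this (by simp [hs])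
    | append_singleton m₂ s₂ _ =>
      have hlast₁ : (m ++ [s]).getLastD K.init = s := ulast_snoc K m s
      have hlast₂ : (m₂ ++ [s₂]).getLastD K.init = s₂ := ulast_snoc K m₂ s₂
      have hs₁ : s ∈ K.init :: (m₂ ++ [s₂]) := (hmem s).mp (by simp)
      have hs₂ : s₂ ∈ K.init :: (m ++ [s]) := (hmem s₂).mpr (by simp)
      have r₁ : Relation.ReflTransGen (ustep K) s s₂ := by
        have := chain_reach _ _ h₂.1 s hs₁; rwa [hlast₂] at this
      have r₂ : Relation.ReflTransGen (ustep K) s₂ s := by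
        have := chain_reach _ _ h₁.1 s₂ hs₂; rwa [hlast₁] at this
      have hss : s = s₂ := by
        by_contra hne
        rcases Relation.reflTransGen_iff_eq_or_transGen.mp r₁ with h | h
        · exact hne h.symm
        · exact hK.2 s₂ (Relation.TransGen.trans_right r₂ h)
      subst hss
      have hnm₁ : s ∉ K.init :: m := by
        have := h₁.2
        have : ((K.init :: m) ++ [s]).Nodup := by simpa using this
        simp only [List.nodup_append, List.disjoint_singleton] at this
        exact fun h => this.2.2 s h s (by simp) rfl
      have hnm₂ : s ∉ K.init :: m₂ := by
        have := h₂.2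
        have : ((K.init :: m₂) ++ [s]).Nodup := by simpa using this
        simp only [List.nodup_append, List.disjoint_singleton] at this
        exact fun h => this.2.2 s h s (by simp) rfl
      have hmem' : ∀ x, x ∈ K.init :: m ↔ x ∈ K.init :: m₂ := by
        intro x
        constructor
        · intro hx
          have hx' : x ∈ K.init :: (m₂ ++ [s]) := by
            apply (hmem x).mp
            rcases List.mem_cons.mp hx with rfl | hx
            · simp
            · simp [hx]
          rcases List.mem_cons.mp hx' with rfl | hx'
          · simp
          · rcases List.mem_append.mp hx' with h | h
            · simp [h]
            · exfalso; simp at h; subst h; exact hnm₁ hx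
        · intro hx
          have hx' : x ∈ K.init :: (m ++ [s]) := by
            apply (hmem x).mpr
            rcases List.mem_cons.mp hx with rfl | hx
            · simp
            · simp [hx]
          rcases List.mem_cons.mp hx' with rfl | hx'
          · simp
          · rcases List.mem_append.mp hx' with h | h
            · simp [h]
            · exfalso; simp at h; subst h; exact hnm₂ hx
      rw [ih m₂ (uGood_prefix h₁) (uGood_prefix h₂) hmem']

open Classical in
noncomputable def unrollSeq (K : Kripke S AP) (p : ℕ → S) : ℕ → List S × Bool
  | 0 => ([], false)
  | (i+1) =>
    if p (i + 1) = p i then ((unrollSeq K p i).1, true)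
    else ((unrollSeq K p i).1 ++ [p (i + 1)], false)


end KripkeUnroll

open KripkeUnroll

/-- Unrolling preserves trace sets: every acyclic Kripke structure with `n` states can be
unrolled to a tree-shaped Kripke structure with the same set of traces and at most
`n * 2 ^ n` states. -/
theorem acyclic_unrolls_to_tree {S AP : Type} [Fintype S]
    (K : Kripke S AP) (hK : K.Acyclic) :
    ∃ (S' : Type) (inst : Fintype S') (K' : Kripke S' AP),
      K'.TreeShaped ∧ (∀ t : ℕ → Set AP, K'.IsTrace t ↔ K.IsTrace t) ∧
      @Fintype.card S' inst ≤ Fintype.card S * 2 ^ Fintype.card S := by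
  classical
  let P : List S × Bool → Prop := fun x =>
    uGood K x.1 ∧ (x.2 = true → K.rel (ulast K x.1) (ulast K x.1))
  let T := {x : List S × Bool // P x}
  let f : T → S × Finset S := fun x =>
    (ulast K x.1.1, if x.1.2 then (K.init :: x.1.1).toFinset else x.1.1.toFinset)
  have hinj : Function.Injective f := by
    rintro ⟨⟨l₁, b₁⟩, h₁⟩ ⟨⟨l₂, b₂⟩, h₂⟩ hf
    have hsnd : (if b₁ then (K.init :: l₁).toFinset else l₁.toFinset)
        = (if b₂ then (K.init :: l₂).toFinset else l₂.toFinset) := congrArg Prod.snd hf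
    have hini₁ : K.init ∉ l₁ := (List.nodup_cons.mp h₁.1.2).1
    have hini₂ : K.init ∉ l₂ := (List.nodup_cons.mp h₂.1.2).1
    have hb : b₁ = b₂ := by
      cases b₁ <;> cases b₂ <;> simp only [if_true, if_false, Bool.false_eq_true,
        Bool.true_eq_false] at hsnd ⊢
      · exfalso
        have h := List.mem_toFinset.mpr (List.mem_cons_self (a := K.init) (l := l₂))
        rw [← hsnd] at h
        exact hini₁ (List.mem_toFinset.mp h)
      · exfalso
        have h := List.mem_toFinset.mpr (List.mem_cons_self (a := K.init) (l := l₁))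
        rw [hsnd] at h
        exact hini₂ (List.mem_toFinset.mp h)
    subst hb
    have hset : ∀ x, x ∈ K.init :: l₁ ↔ x ∈ K.init :: l₂ := by
      intro x
      cases b₁ <;> simp only [if_true, if_false, Bool.false_eq_true] at hsnd
      · simp only [List.mem_cons]
        have hx : x ∈ l₁ ↔ x ∈ l₂ := by
          rw [← List.mem_toFinset, ← List.mem_toFinset, hsnd]
        tauto
      · rw [← List.mem_toFinset, ← List.mem_toFinset, hsnd]
    have : l₁ = l₂ := set_det K hK l₁ l₂ h₁.1 h₂.1 hset
    subst this
    rfl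
  haveI instT : Fintype T := Fintype.ofInjective f hinj
  have hPinit : P ([], false) := ⟨⟨List.Chain.nil, by simp⟩, by simp⟩
  have hext : ∀ (x : T), ¬ K.rel (ulast K x.1.1) (ulast K x.1.1) →
      ∃ s, ustep K (ulast K x.1.1) s ∧ P (x.1.1 ++ [s], false) := by
    rintro ⟨⟨l, b⟩, hx⟩ hns
    obtain ⟨s, hs⟩ := K.total (ulast K l)
    have hne : s ≠ ulast K l := fun h => hns (h ▸ hs)
    have hstep : ustep K (ulast K l) s := ⟨Ne.symm hne, hs⟩
    have hnm : s ∉ K.init :: l := not_mem_of_rel K hK hx.1.1 hs hne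
    exact ⟨s, hstep, ⟨uGood_snoc hx.1 hstep hnm, by simp⟩⟩
  let K' : Kripke T AP :=
    { init := ⟨([], false), hPinit⟩
      rel := fun x y =>
        (y.1.1 = x.1.1 ∧ y.1.2 = true ∧ K.rel (ulast K x.1.1) (ulast K x.1.1)) ∨
        (y.1.2 = false ∧ ∃ s, y.1.1 = x.1.1 ++ [s])
      label := fun x => K.label (ulast K x.1.1)
      total := by
        rintro x
        by_cases hs : K.rel (ulast K x.1.1) (ulast K x.1.1)
        · exact ⟨⟨(x.1.1, true), ⟨x.2.1, fun _ => hs⟩⟩, Or.inl ⟨rfl, rfl, hs⟩⟩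
        · obtain ⟨s, _, hP⟩ := hext x hs
          exact ⟨⟨(x.1.1 ++ [s], false), hP⟩, Or.inr ⟨rfl, s, rfl⟩⟩ }
  refine ⟨T, instT, K', ?_, ?_, ?_⟩
  · -- TreeShaped
    refine ⟨?_, ?_, ?_⟩
    · -- unique predecessor
      rintro ⟨⟨m, c⟩, hy⟩ hne
      cases c with
      | true =>
        refine ⟨⟨(m, false), ⟨hy.1, by simp⟩⟩, ⟨?_, Or.inl ⟨rfl, rfl, hy.2 rfl⟩⟩, ?_⟩
        · intro h
          have := congrArg (fun z : T => z.1.2) h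
          simp at this
        · rintro ⟨⟨l, b⟩, hx⟩ ⟨hxne, hrel⟩
          rcases hrel with ⟨h1, _, _⟩ | ⟨h1, _⟩
          · simp only at h1
            subst h1
            cases b with
            | false => rfl
            | true => exact absurd (Subtype.ext rfl) hxne
          · exact absurd h1 (by simp)
      | false =>
        have hmne : m ≠ [] := by
          intro h
          subst h
          exact hne (Subtype.ext rfl)
        obtain ⟨m', s, hm⟩ := (List.eq_nil_or_concat m).resolve_left hmne
        rw [List.concat_eq_append] at hm
        subst hm
        have hg' : uGood K m' := uGood_prefix hy.1
        have hstep : ustep K (ulast K m') s := step_of_good_snoc hy.1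
        have hnsink : ¬ K.rel (ulast K m') (ulast K m') := by
          intro hs
          exact hstep.1 (hK.1 _ s hs hstep.2).symm
        refine ⟨⟨(m', false), ⟨hg', by simp⟩⟩, ⟨?_, Or.inr ⟨rfl, s, rfl⟩⟩, ?_⟩
        · intro h
          have : m' = m' ++ [s] := congrArg (fun z : T => z.1.1) h
          simpa using this
        · rintro ⟨⟨l, b⟩, hx⟩ ⟨hxne, hrel⟩
          rcases hrel with ⟨_, h2, _⟩ | ⟨_, s', h2⟩
          · exact absurd h2 (by simp)
          · simp only at h2
            have hlen : l.length = m'.length := by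
              have := congrArg List.length h2
              simp at this
              omega
            obtain ⟨hl, hs⟩ := List.append_inj h2 (by simpa using hlen.symm)
            subst hl
            have hb : b = false := by
              cases b with
              | false => rfl
              | true => exact absurd (hx.2 rfl) hnsink
            subst hb
            rfl
    · -- no predecessor of init
      rintro ⟨⟨l, b⟩, hx⟩ hrel
      rcases hrel with ⟨_, h2, _⟩ | ⟨_, s, h2⟩
      · exact absurd h2 (by simp)
      · exact absurd h2 (by show ¬ ([] : List S) = l ++ [s]; simp)
    · -- self-loop iff no other successor
      rintro ⟨⟨l, b⟩, hx⟩
      constructor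
      · rintro (⟨_, h2, hsink⟩ | ⟨_, s, h2⟩)
        · simp only at h2
          subst h2
          rintro ⟨⟨m, c⟩, hy⟩ hyne hrel
          rcases hrel with ⟨g1, g2, _⟩ | ⟨_, s, g1⟩
          · simp only at g1 g2
            subst g1
            subst g2
            exact hyne (Subtype.ext rfl)
          · simp only at g1
            subst g1
            have hstep := step_of_good_snoc hy.1
            exact hstep.1 (hK.1 _ s hsink hstep.2).symm
        · exact absurd h2 (by simp)
      · intro hno
        by_cases hs : K.rel (ulast K l) (ulast K l)
        · cases b with
          | true => exact Or.inl ⟨rfl, rfl, hs⟩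
          | false =>
            exfalso
            refine hno ⟨(l, true), ⟨hx.1, fun _ => hs⟩⟩ ?_ (Or.inl ⟨rfl, rfl, hs⟩)
            intro h
            have := congrArg (fun z : T => z.1.2) h
            simp at this
        · exfalso
          obtain ⟨s, hstep, hP⟩ := hext ⟨(l, b), hx⟩ hs
          refine hno ⟨(l ++ [s], false), hP⟩ ?_ (Or.inr ⟨rfl, s, rfl⟩)
          intro h
          have : l ++ [s] = l := congrArg (fun z : T => z.1.1) h
          simpa using this
  · -- traces
    intro t
    constructor
    · rintro ⟨q, ⟨hq0, hqrel⟩, hqt⟩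
      refine ⟨fun i => ulast K (q i).1.1, ⟨?_, ?_⟩, fun i => hqt i⟩
      · show ulast K (q 0).1.1 = K.init
        rw [hq0]
        rfl
      · intro i
        show K.rel (ulast K (q i).1.1) (ulast K (q (i + 1)).1.1)
        rcases hqrel i with ⟨h1, _, hsink⟩ | ⟨_, s, h1⟩
        · rw [h1]
          exact hsink
        · rw [h1, ulast_snoc]
          have hstep : ustep K (ulast K (q i).1.1) s := by
            have hgood := (q (i + 1)).2.1
            rw [h1] at hgood
            exact step_of_good_snoc hgood
          exact hstep.2
    · rintro ⟨p, ⟨hp0, hprel⟩, hpt⟩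
      let u := unrollSeq K p
      have hupos : ∀ i, p (i + 1) = p i → u (i + 1) = ((u i).1, true) := by
        intro i h
        show unrollSeq K p (i + 1) = _
        rw [unrollSeq, if_pos h]
      have huneg : ∀ i, ¬ p (i + 1) = p i → u (i + 1) = ((u i).1 ++ [p (i + 1)], false) := by
        intro i h
        show unrollSeq K p (i + 1) = _
        rw [unrollSeq, if_neg h]
      have key : ∀ i, P (u i) ∧ ulast K (u i).1 = p i := by
        intro i
        induction i with
        | zero => exact ⟨hPinit, hp0.symm⟩
        | succ i ih =>
          by_cases h : p (i + 1) = p i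
          · rw [hupos i h]
            refine ⟨⟨ih.1.1, fun _ => ?_⟩, by rw [ih.2, h]⟩
            rw [ih.2]
            have hr := hprel i
            rw [h] at hr
            exact hr
          · rw [huneg i h]
            have hrel : K.rel (ulast K (u i).1) (p (i + 1)) := by
              rw [ih.2]; exact hprel i
            have hne : p (i + 1) ≠ ulast K (u i).1 := by rw [ih.2]; exact h
            have hstep : ustep K (ulast K (u i).1) (p (i + 1)) := ⟨Ne.symm hne, hrel⟩
            have hnm := not_mem_of_rel K hK ih.1.1.1 hrel hne
            exact ⟨⟨uGood_snoc ih.1.1 hstep hnm, by simp⟩, ulast_snoc K _ _⟩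
      refine ⟨fun i => ⟨u i, (key i).1⟩, ⟨?_, ?_⟩, ?_⟩
      · show (⟨u 0, (key 0).1⟩ : T) = K'.init
        apply Subtype.ext
        rfl
      · intro i
        by_cases h : p (i + 1) = p i
        · left
          refine ⟨?_, ?_, ?_⟩
          · show (u (i + 1)).1 = (u i).1
            rw [hupos i h]
          · show (u (i + 1)).2 = true
            rw [hupos i h]
          · show K.rel (ulast K (u i).1) (ulast K (u i).1)
            rw [(key i).2]
            have hr := hprel i
            rw [h] at hr
            exact hr
        · right
          constructor
          · show (u (i + 1)).2 = false
            rw [huneg i h]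
          · refine ⟨p (i + 1), ?_⟩
            show (u (i + 1)).1 = (u i).1 ++ [p (i + 1)]
            rw [huneg i h]
      · intro i
        show t i = K.label (ulast K (u i).1)
        rw [hpt i, (key i).2]
  · -- cardinality
    have hcard := Fintype.card_le_of_injective f hinj
    calc Fintype.card T ≤ Fintype.card (S × Finset S) := hcard
      _ = Fintype.card S * 2 ^ Fintype.card S := by
          rw [Fintype.card_prod, Fintype.card_finset]
end
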